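/- arXiv:2509.18740 — 6 statements merged into one kernel-verified Lean document; each statement's English description precedes it below -/
import Mathlib

section
/- Let m ≥ 1, let σ be a bell-regular sigmoidal function of class D(m), let r ∈ ℕ, and let P⃗ = (p_1,…,p_r) with 1 ≤ p_1 ≤ … ≤ p_r < ∞. Then for every continuous function f : [−1,1]^r → ℝ and every ε > 0 there exists N ∈ ℕ such that ‖K_n f − f‖_{P⃗} < ε for all n ≥ N; that is, K_n f → f in the mixed norm ‖·‖_{P⃗} as n → ∞. -/
open MeasureTheory Filter Set
open scoped ENNReal BigOperators

noncomputable section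

/-- The density function `Ψ_σ(x) := (σ(x+1) − σ(x−1))/2` of a sigmoidal function `σ`. -/
def Psi (σ : ℝ → ℝ) (x : ℝ) : ℝ := (σ (x + 1) - σ (x - 1)) / 2

/-- A sigmoidal function of class `D(m)`: measurable, non-decreasing, `σ(x) = 0` for `x ≤ −m`
and `σ(x) = 1` for `x ≥ m`. -/
def SigmoidalD (m : ℝ) (σ : ℝ → ℝ) : Prop :=
  Measurable σ ∧ Monotone σ ∧ (∀ x, x ≤ -m → σ x = 0) ∧ (∀ x, m ≤ x → σ x = 1)

/-- `σ` is bell-regular: `Ψ_σ` is non-decreasing on `(−∞,0]`, non-increasing on `[0,∞)`,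
and `Ψ_σ(2) > 0`. -/
def BellRegular (σ : ℝ → ℝ) : Prop :=
  MonotoneOn (Psi σ) (Set.Iic 0) ∧ AntitoneOn (Psi σ) (Set.Ici 0) ∧ 0 < Psi σ 2

/-- The multivariate Kantorovich-type neural network operator `K_n(f,x)`. -/
def Kop (σ : ℝ → ℝ) (r n : ℕ) (f : (Fin r → ℝ) → ℝ) (x : Fin r → ℝ) : ℝ :=
  (∑ k ∈ Fintype.piFinset (fun _ : Fin r => Finset.Icc (-(n : ℤ)) ((n : ℤ) - 1)),
      (((n : ℝ) ^ r *
          ∫ t in Set.univ.pi (fun j => Set.Icc ((k j : ℝ) / (n : ℝ)) (((k j : ℝ) + 1) / (n : ℝ))),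
            f t) *
        ∏ i, Psi σ ((n : ℝ) * x i - (k i : ℝ)))) /
  (∑ k ∈ Fintype.piFinset (fun _ : Fin r => Finset.Icc (-(n : ℤ)) ((n : ℤ) - 1)),
      ∏ i, Psi σ ((n : ℝ) * x i - (k i : ℝ)))

/-- The mixed Lebesgue norm `‖f‖_{P⃗}` (valued in `ℝ≥0∞`) on the cube `[−1,1]^r`:
innermost variable integrated with exponent `p 0`, outermost with exponent `p (r-1)`. -/
def mixedNormE : (r : ℕ) → (Fin r → ℝ) → ((Fin r → ℝ) → ℝ) → ℝ≥0∞
  | 0, _, f => ENNReal.ofReal |f (fun i => i.elim0)|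
  | r + 1, p, f =>
      (∫⁻ t in Set.Icc (-1 : ℝ) 1,
          (mixedNormE r (fun i => p i.castSucc) (fun y => f (Fin.snoc y t))) ^ (p (Fin.last r))) ^
        (1 / p (Fin.last r))

/-- Membership in the mixed norm Lebesgue space `L^{P⃗}([−1,1]^r)`. -/
def MemMixedLp (r : ℕ) (p : Fin r → ℝ) (f : (Fin r → ℝ) → ℝ) : Prop :=
  Measurable f ∧ mixedNormE r p f < ⊤

/-- An Orlicz function: continuous, convex, non-decreasing on `[0,∞)`, vanishing at `0`,
tending to `∞` at `∞`. -/
def OrliczFun (φ : ℝ → ℝ) : Prop :=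
  ContinuousOn φ (Set.Ici 0) ∧ ConvexOn ℝ (Set.Ici 0) φ ∧ MonotoneOn φ (Set.Ici 0) ∧
    φ 0 = 0 ∧ Tendsto φ atTop atTop

/-- Extension of an Orlicz function to `ℝ≥0∞`. -/
def eext (φ : ℝ → ℝ) (v : ℝ≥0∞) : ℝ≥0∞ :=
  if v = ⊤ then ⊤ else ENNReal.ofReal (φ v.toReal)

/-- The mixed modular `I^{Φ⃗}[f]` (valued in `ℝ≥0∞`) on the cube `[−1,1]^r`. -/
def mixedModularE : (r : ℕ) → (Fin r → ℝ → ℝ) → ((Fin r → ℝ) → ℝ) → ℝ≥0∞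
  | 0, _, f => ENNReal.ofReal |f (fun i => i.elim0)|
  | r + 1, Φ, f =>
      ∫⁻ t in Set.Icc (-1 : ℝ) 1,
        eext (Φ (Fin.last r)) (mixedModularE r (fun i => Φ i.castSucc) (fun y => f (Fin.snoc y t)))

/-- Membership in the mixed norm Orlicz space `L^{Φ⃗}([−1,1]^r)`. -/
def MemMixedOrlicz (r : ℕ) (Φ : Fin r → ℝ → ℝ) (f : (Fin r → ℝ) → ℝ) : Prop :=
  Measurable f ∧ ∃ lam > (0 : ℝ), mixedModularE r Φ (fun x => lam * f x) < ⊤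

/-- The Luxemburg norm on the mixed norm Orlicz space. -/
def luxNorm (r : ℕ) (Φ : Fin r → ℝ → ℝ) (f : (Fin r → ℝ) → ℝ) : ℝ :=
  sInf {lam : ℝ | 0 < lam ∧ mixedModularE r Φ (fun x => f x / lam) ≤ 1}

/-- The cube `[−1,1]^r`. -/
def cube (r : ℕ) : Set (Fin r → ℝ) := Set.univ.pi fun _ => Set.Icc (-1 : ℝ) 1

lemma Psi_nonneg {m : ℝ} {σ : ℝ → ℝ} (hσ : SigmoidalD m σ) (x : ℝ) : 0 ≤ Psi σ x := by
  have := hσ.2.1 (show x - 1 ≤ x + 1 by linarith)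
  unfold Psi; linarith

lemma Psi_zero {m : ℝ} {σ : ℝ → ℝ} (hσ : SigmoidalD m σ) {x : ℝ} (hx : m + 1 ≤ |x|) :
    Psi σ x = 0 := by
  unfold Psi
  rcases le_abs'.1 hx with h | h
  · rw [hσ.2.2.1 (x+1) (by linarith), hσ.2.2.1 (x-1) (by linarith)]; ring
  · rw [hσ.2.2.2 (x+1) (by linarith), hσ.2.2.2 (x-1) (by linarith)]; ring

lemma Kop_pointwise (m : ℝ) (hm : 1 ≤ m) (σ : ℝ → ℝ)
    (hσ : SigmoidalD m σ) (hbell : BellRegular σ)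
    (r n : ℕ) (hn : 1 ≤ n) (f : (Fin r → ℝ) → ℝ) (hf : ContinuousOn f (cube r))
    (ε' δ : ℝ) (hε' : 0 ≤ ε') (hδ : 0 < δ)
    (hδf : ∀ x ∈ cube r, ∀ y ∈ cube r, dist x y ≤ δ → |f x - f y| ≤ ε')
    (hnδ : (m + 2) / n ≤ δ)
    (x : Fin r → ℝ) (hx : x ∈ cube r) :
    |Kop σ r n f x - f x| ≤ ε' := by
  have hn0 : (0:ℝ) < n := by exact_mod_cast hn
  set S := Fintype.piFinset (fun _ : Fin r => Finset.Icc (-(n : ℤ)) ((n : ℤ) - 1)) with hS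
  set W : (Fin r → ℤ) → ℝ := fun k => ∏ i, Psi σ ((n : ℝ) * x i - (k i : ℝ)) with hW
  set A : (Fin r → ℤ) → ℝ := fun k => (n : ℝ) ^ r *
      ∫ t in Set.univ.pi (fun j => Set.Icc ((k j : ℝ) / (n : ℝ)) (((k j : ℝ) + 1) / (n : ℝ))), f t
    with hA
  have hWnonneg : ∀ k, 0 ≤ W k := fun k =>
    Finset.prod_nonneg fun i _ => Psi_nonneg hσ _
  -- denominator lower bound
  set k₀ : Fin r → ℤ := fun i => min ⌊(n:ℝ) * x i⌋ ((n:ℤ) - 1) with hk₀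
  have hxmem : ∀ i, x i ∈ Set.Icc (-1:ℝ) 1 := fun i => hx i (Set.mem_univ _)
  have hk₀mem : k₀ ∈ S := by
    rw [hS, Fintype.mem_piFinset]
    intro i
    rw [Finset.mem_Icc]
    constructor
    · refine le_min ?_ (by omega)
      refine Int.le_floor.2 ?_
      push_cast
      nlinarith [(hxmem i).1]
    · exact min_le_right _ _
  have hk₀bd : ∀ i, 0 ≤ (n:ℝ) * x i - (k₀ i : ℝ) ∧ (n:ℝ) * x i - (k₀ i : ℝ) ≤ 2 := by
    intro i
    have h1 := Int.floor_le ((n:ℝ) * x i)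
    have h2 := Int.lt_floor_add_one ((n:ℝ) * x i)
    have hxu : (n:ℝ) * x i ≤ n := by nlinarith [(hxmem i).2]
    rcases min_cases (⌊(n:ℝ) * x i⌋) ((n:ℤ) - 1) with ⟨he, _⟩ | ⟨he, hlt⟩ <;>
      rw [hk₀] <;> simp only [he] <;> constructor <;> push_cast <;>
      first
      | linarith
      | (have : ((n:ℤ) - 1 : ℝ) ≤ (⌊(n:ℝ) * x i⌋ : ℝ) := by exact_mod_cast le_of_lt hlt
         push_cast at this ⊢ <;> linarith)
  have hWk₀ : Psi σ 2 ^ r ≤ W k₀ := by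
    rw [hW]
    calc Psi σ 2 ^ r = ∏ _i : Fin r, Psi σ 2 := by
          rw [Finset.prod_const, Finset.card_univ, Fintype.card_fin]
      _ ≤ _ := by
          refine Finset.prod_le_prod (fun i _ => le_of_lt hbell.2.2) (fun i _ => ?_)
          exact hbell.2.1 (hk₀bd i).1 (by norm_num) (hk₀bd i).2
  have hD : 0 < ∑ k ∈ S, W k := by
    have h1 : Psi σ 2 ^ r ≤ ∑ k ∈ S, W k :=
      le_trans hWk₀ (Finset.single_le_sum (fun k _ => hWnonneg k) hk₀mem)
    have := pow_pos hbell.2.2 r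
    linarith
  set D := ∑ k ∈ S, W k with hDdef
  -- key: for each k with W k ≠ 0, |A k - f x| ≤ ε'
  have hkey : ∀ k ∈ S, |(A k - f x) * W k| ≤ ε' * W k := by
    intro k hk
    rcases eq_or_ne (W k) 0 with h0 | h0
    · rw [h0]; simp
    · rw [abs_mul, abs_of_nonneg (hWnonneg k)]
      refine mul_le_mul_of_nonneg_right ?_ (hWnonneg k)
      -- each Psi factor nonzero
      have hfac : ∀ i, |(n:ℝ) * x i - (k i : ℝ)| < m + 1 := by
        intro i
        by_contra hcon
        push_neg at hcon
        exact h0 (Finset.prod_eq_zero (Finset.mem_univ i) (Psi_zero hσ hcon))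
      set I : Set (Fin r → ℝ) :=
        Set.univ.pi (fun j => Set.Icc ((k j : ℝ) / (n : ℝ)) (((k j : ℝ) + 1) / (n : ℝ))) with hI
      have hkrange : ∀ i, (-(n:ℤ)) ≤ k i ∧ k i ≤ (n:ℤ) - 1 := by
        intro i
        have := (Fintype.mem_piFinset.1 hk) i
        rw [Finset.mem_Icc] at this
        exact this
      have hIcube : I ⊆ cube r := by
        refine Set.pi_mono fun i _ => ?_
        have h1 : (-(n:ℤ):ℝ) ≤ (k i : ℝ) := by exact_mod_cast (hkrange i).1
        have h2 : ((k i : ℝ)) ≤ (n:ℝ) - 1 := by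
          have h := (hkrange i).2
          have : ((k i : ℝ)) ≤ (((n:ℤ) - 1 : ℤ) : ℝ) := by exact_mod_cast h
          push_cast at this; linarith
        push_cast at h1
        refine Set.Icc_subset_Icc ?_ ?_
        · rw [le_div_iff₀ hn0]; linarith
        · rw [div_le_one hn0]; linarith
      have hImeas : MeasurableSet I := MeasurableSet.univ_pi fun i => measurableSet_Icc
      have hIvol : volume I = ENNReal.ofReal ((1:ℝ)/n) ^ r := by
        rw [hI, volume_pi_pi]
        have : ∀ j : Fin r, volume (Set.Icc ((k j : ℝ) / (n : ℝ)) (((k j : ℝ) + 1) / (n : ℝ)))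
            = ENNReal.ofReal ((1:ℝ)/n) := by
          intro j
          rw [Real.volume_Icc]
          congr 1
          field_simp
          ring
        simp [this]
      have hIvolR : (volume I).toReal = ((1:ℝ)/n) ^ r := by
        rw [hIvol, ← ENNReal.ofReal_pow (by positivity), ENNReal.toReal_ofReal (by positivity)]
      -- pointwise estimate on I
      have hclose : ∀ t ∈ I, |f t - f x| ≤ ε' := by
        intro t ht
        refine hδf t (hIcube ht) x hx ?_
        refine le_trans ?_ hnδ
        refine (dist_pi_le_iff (by
          apply div_nonneg (by linarith) (le_of_lt hn0))).2 ?_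
        intro i
        have ht1 := ht i (Set.mem_univ _)
        rw [Real.dist_eq]
        have hxi : |x i - (k i : ℝ)/n| ≤ (m+1)/n := by
          have e : x i - (k i:ℝ)/n = ((n:ℝ) * x i - (k i:ℝ))/n := by
            field_simp
          rw [e, abs_div, abs_of_pos hn0]
          exact (div_le_div_iff_of_pos_right hn0).2 (le_of_lt (hfac i))
        have ht2 : |t i - (k i : ℝ)/n| ≤ 1/n := by
          have h1 := ht1.1
          have h2 := ht1.2
          have e : ((k i:ℝ)+1)/n = (k i:ℝ)/n + 1/n := by ring
          rw [e] at h2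
          rw [abs_le]
          constructor <;> linarith [div_nonneg (zero_le_one (α := ℝ)) (le_of_lt hn0)]
        calc |t i - x i| ≤ |t i - (k i:ℝ)/n| + |x i - (k i:ℝ)/n| := by
              rw [← abs_neg (x i - (k i:ℝ)/n)]
              refine le_trans (le_of_eq (by ring_nf)) (abs_add_le _ _)
          _ ≤ 1/n + (m+1)/n := add_le_add ht2 hxi
          _ = (m+2)/n := by ring
      -- integrability
      have hIcomp : IsCompact I := isCompact_univ_pi fun i => isCompact_Icc
      have hfint : IntegrableOn f I := by
        refine ContinuousOn.integrableOn_compact hIcomp (hf.mono hIcube)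
      have hIfin : volume I < ⊤ := by
        rw [hIvol]; exact ENNReal.pow_lt_top ENNReal.ofReal_lt_top
      have hconst : ∀ c : ℝ, IntegrableOn (fun _ : Fin r → ℝ => c) I := fun c =>
        integrableOn_const hIfin.ne
      have hsub : ∫ t in I, (f t - f x) = (∫ t in I, f t) - f x * ((1:ℝ)/n)^r := by
        rw [integral_sub hfint (hconst (f x)), setIntegral_const, smul_eq_mul, measureReal_def, hIvolR]
        ring
      have hbound : |∫ t in I, (f t - f x)| ≤ ε' * ((1:ℝ)/n)^r := by
        have h1 : |∫ t in I, (f t - f x)| ≤ ∫ t in I, |f t - f x| := by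
          simpa [Real.norm_eq_abs] using
            norm_integral_le_integral_norm (μ := volume.restrict I) (fun t => f t - f x)
        have h2 : ∫ t in I, |f t - f x| ≤ ∫ _t in I, ε' := by
          refine setIntegral_mono_on (hfint.sub (hconst (f x))).abs (hconst ε') hImeas ?_
          exact fun t ht => hclose t ht
        have h3 : ∫ _t in I, (ε':ℝ) = ε' * ((1:ℝ)/n)^r := by
          rw [setIntegral_const, smul_eq_mul, measureReal_def, hIvolR]; ring
        linarith
      have hnr : (n:ℝ)^r * ((1:ℝ)/n)^r = 1 := by
        rw [← mul_pow, mul_one_div_cancel hn0.ne', one_pow]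
      have hAk : A k = (n:ℝ)^r * ∫ t in I, f t := rfl
      have hkey2 : A k - f x = (n:ℝ)^r * ∫ t in I, (f t - f x) := by
        rw [hAk, hsub]
        linear_combination f x * hnr
      rw [hkey2, abs_mul, abs_of_nonneg (by positivity : (0:ℝ) ≤ (n:ℝ)^r)]
      calc (n:ℝ)^r * |∫ t in I, (f t - f x)| ≤ (n:ℝ)^r * (ε' * ((1:ℝ)/n)^r) := by
            exact mul_le_mul_of_nonneg_left hbound (by positivity)
        _ = ε' := by rw [← mul_assoc, mul_comm ((n:ℝ)^r) ε', mul_assoc, hnr, mul_one]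
  -- assemble
  have hKop : Kop σ r n f x = (∑ k ∈ S, A k * W k) / D := rfl
  have hnum : Kop σ r n f x - f x = (∑ k ∈ S, (A k - f x) * W k) / D := by
    rw [hKop]
    rw [eq_div_iff (ne_of_gt hD), sub_mul, div_mul_cancel₀ _ (ne_of_gt hD)]
    rw [hDdef, Finset.mul_sum, ← Finset.sum_sub_distrib]
    congr 1
    ext k
    ring
  rw [hnum, abs_div, abs_of_pos hD, div_le_iff₀ hD]
  calc |∑ k ∈ S, (A k - f x) * W k| ≤ ∑ k ∈ S, |(A k - f x) * W k| :=
        Finset.abs_sum_le_sum_abs _ _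
    _ ≤ ∑ k ∈ S, ε' * W k := Finset.sum_le_sum hkey
    _ = ε' * D := by rw [hDdef, Finset.mul_sum]

lemma mixedNormE_le (r : ℕ) (p : Fin r → ℝ) (hp : ∀ i, 1 ≤ p i)
    (g : (Fin r → ℝ) → ℝ) (M : ℝ)
    (hg : ∀ x ∈ cube r, |g x| ≤ M) :
    mixedNormE r p g ≤ ENNReal.ofReal M * 2 ^ r := by
  induction r with
  | zero =>
      simp only [mixedNormE, pow_zero, mul_one]
      exact ENNReal.ofReal_le_ofReal (hg _ (by simp [cube]))
  | succ r ih =>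
      have hq : 1 ≤ p (Fin.last r) := hp _
      have hq0 : 0 < p (Fin.last r) := by linarith
      set q := p (Fin.last r)
      set B : ℝ≥0∞ := ENNReal.ofReal M * 2 ^ r with hB
      have hinner : ∀ t ∈ Set.Icc (-1:ℝ) 1,
          mixedNormE r (fun i => p i.castSucc) (fun y => g (Fin.snoc y t)) ≤ B := by
        intro t ht
        refine ih (fun i => p i.castSucc) (fun i => hp _) _ ?_
        intro y hy
        refine hg _ ?_
        intro i _
        refine Fin.lastCases ?_ ?_ i
        · simpa using ht
        · intro j; simpa using hy j (Set.mem_univ _)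
      have key : (∫⁻ t in Set.Icc (-1 : ℝ) 1,
          (mixedNormE r (fun i => p i.castSucc) (fun y => g (Fin.snoc y t))) ^ q)
          ≤ B ^ q * ENNReal.ofReal 2 := by
        have h1 : (∫⁻ t in Set.Icc (-1 : ℝ) 1,
            (mixedNormE r (fun i => p i.castSucc) (fun y => g (Fin.snoc y t))) ^ q)
            ≤ ∫⁻ _ in Set.Icc (-1 : ℝ) 1, B ^ q := by
          refine lintegral_mono_ae ?_
          refine (ae_restrict_iff' measurableSet_Icc).2 (ae_of_all _ fun t ht => ?_)
          exact ENNReal.rpow_le_rpow (hinner t ht) (le_of_lt hq0)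
        calc _ ≤ _ := h1
          _ = B ^ q * ENNReal.ofReal 2 := by
            rw [lintegral_const, Measure.restrict_apply_univ, Real.volume_Icc]
            norm_num
      have hBne : B ^ q * ENNReal.ofReal 2 ≠ ⊤ := by
        refine ENNReal.mul_ne_top ?_ (by simp)
        refine ENNReal.rpow_ne_top_of_nonneg (le_of_lt hq0) ?_
        exact ENNReal.mul_ne_top ENNReal.ofReal_ne_top (by simp)
      calc mixedNormE (r+1) p g
          ≤ (B ^ q * ENNReal.ofReal 2) ^ (1/q) := by
            rw [mixedNormE]
            exact ENNReal.rpow_le_rpow key (by positivity)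
        _ ≤ B * 2 := by
            rw [ENNReal.mul_rpow_of_ne_top (by
              refine ENNReal.rpow_ne_top_of_nonneg (le_of_lt hq0) ?_
              exact ENNReal.mul_ne_top ENNReal.ofReal_ne_top (by simp)) (by simp),
              ← ENNReal.rpow_mul, mul_one_div, div_self (ne_of_gt hq0), ENNReal.rpow_one]
            refine mul_le_mul_right ?_ _
            calc (ENNReal.ofReal 2) ^ (1/q) ≤ (ENNReal.ofReal 2) ^ (1:ℝ) :=
                  ENNReal.rpow_le_rpow_of_exponent_le (by norm_num [ENNReal.one_le_ofReal]) (by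
                    rw [div_le_one hq0]; exact hq)
              _ = 2 := by norm_num
        _ = ENNReal.ofReal M * 2 ^ (r+1) := by rw [hB]; ring

/-- for every continuous `f` on `[−1,1]^r`, `K_n f → f` in the mixed norm
`‖·‖_{P⃗}` as `n → ∞`. -/
theorem statement2 (m : ℝ) (hm : 1 ≤ m) (σ : ℝ → ℝ)
    (hσ : SigmoidalD m σ) (hbell : BellRegular σ)
    (r : ℕ) (p : Fin r → ℝ) (hp : ∀ i, 1 ≤ p i) (hpmono : Monotone p)
    (f : (Fin r → ℝ) → ℝ) (hf : ContinuousOn f (cube r)) :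
    ∀ ε > (0 : ℝ), ∃ N : ℕ, ∀ n ≥ N,
      mixedNormE r p (fun x => Kop σ r n f x - f x) < ENNReal.ofReal ε := by
  intro ε hε
  set ε' := ε / 2 ^ (r + 1) with hε'def
  have hε'pos : 0 < ε' := by positivity
  have hcube : IsCompact (cube r) := isCompact_univ_pi fun _ => isCompact_Icc
  have hu : UniformContinuousOn f (cube r) := hcube.uniformContinuousOn_of_continuous hf
  rw [Metric.uniformContinuousOn_iff_le] at hu
  obtain ⟨δ, hδ, hδf⟩ := hu ε' hε'pos
  refine ⟨max 1 ⌈(m + 2) / δ⌉₊, fun n hn => ?_⟩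
  have hn1 : 1 ≤ n := le_trans (le_max_left _ _) hn
  have hn0 : (0:ℝ) < n := by exact_mod_cast hn1
  have hnδ : (m + 2) / n ≤ δ := by
    have h1 : ((m + 2) / δ : ℝ) ≤ (⌈(m + 2) / δ⌉₊ : ℝ) := Nat.le_ceil _
    have h2 : ((⌈(m + 2) / δ⌉₊ : ℕ) : ℝ) ≤ n := by
      exact_mod_cast le_trans (le_max_right _ _) hn
    rw [div_le_iff₀ hδ] at h1
    rw [div_le_iff₀ hn0]
    nlinarith
  have hpt : ∀ x ∈ cube r, |Kop σ r n f x - f x| ≤ ε' := fun x hx =>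
    Kop_pointwise m hm σ hσ hbell r n hn1 f hf ε' δ (le_of_lt hε'pos) hδ
      (fun a ha b hb hab => by rw [← Real.dist_eq]; exact hδf a ha b hb hab) hnδ x hx
  have h2r : (2:ℝ≥0∞) ^ r = ENNReal.ofReal ((2:ℝ) ^ r) := by
    rw [ENNReal.ofReal_pow (by norm_num)]
    norm_num
  calc mixedNormE r p (fun x => Kop σ r n f x - f x)
      ≤ ENNReal.ofReal ε' * 2 ^ r := mixedNormE_le r p hp _ ε' hpt
    _ = ENNReal.ofReal (ε' * 2 ^ r) := by
        rw [h2r, ← ENNReal.ofReal_mul (le_of_lt hε'pos)]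
    _ = ENNReal.ofReal (ε / 2) := by
        congr 1
        rw [hε'def, pow_succ]
        field_simp
    _ < ENNReal.ofReal ε := by
        rw [ENNReal.ofReal_lt_ofReal_iff hε]
        linarith

end
end

section
/- Let m ≥ 1 and let σ be a sigmoidal function of class D(m). Then for every r ∈ ℕ and every x ∈ ℝ^r, the series of translates satisfies ∑_{k ∈ ℤ^r} Ψ_σ(x − k) = 1 (in particular, in dimension one, ∑_{k ∈ ℤ} Ψ_σ(x − k) = 1 for every x ∈ ℝ). -/
open MeasureTheory Filter Set
open scoped ENNReal BigOperators

noncomputable section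

lemma psi_vanish (m : ℝ) (σ : ℝ → ℝ) (hσ : SigmoidalD m σ) (x : ℝ) (N : ℕ)
    (hN : |x| + m + 1 ≤ N) {k : ℤ} (hk : k ∉ Finset.Icc (-(N : ℤ)) N) :
    Psi σ (x - k) = 0 := by
  obtain ⟨_, _, h0, h1⟩ := hσ
  have hx1 : x ≤ |x| := le_abs_self x
  have hx2 : -|x| ≤ x := neg_abs_le x
  simp only [Finset.mem_Icc, not_and_or, not_le] at hk
  rcases hk with hk | hk
  · -- k < -N, so x - k - 1 ≥ m
    have hkr : (k : ℝ) ≤ -(N : ℝ) - 1 := by exact_mod_cast (by omega : k ≤ -(N : ℤ) - 1)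
    have h1' : m ≤ x - k - 1 := by nlinarith
    have h1'' : m ≤ x - k + 1 := by linarith
    simp [Psi, h1 _ h1', h1 _ h1'']
  · -- k > N, so x - k + 1 ≤ -m
    have hkr : (N : ℝ) + 1 ≤ (k : ℝ) := by exact_mod_cast (by omega : (N : ℤ) + 1 ≤ k)
    have h0' : x - k + 1 ≤ -m := by nlinarith
    have h0'' : x - k - 1 ≤ -m := by linarith
    simp [Psi, h0 _ h0', h0 _ h0'']

lemma oneD (m : ℝ) (hm : 1 ≤ m) (σ : ℝ → ℝ) (hσ : SigmoidalD m σ) (x : ℝ) (N : ℕ)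
    (hN : |x| + m + 1 ≤ N) :
    ∑ k ∈ Finset.Icc (-(N : ℤ)) N, Psi σ (x - k) = 1 := by
  obtain ⟨_, _, h0, h1⟩ := hσ
  have hx1 : x ≤ |x| := le_abs_self x
  have hx2 : -|x| ≤ x := neg_abs_le x
  set g : ℤ → ℝ := fun k => (σ (x - k + 1) + σ (x - k)) / 2 with hg
  have hstep : ∀ k : ℤ, Psi σ (x - k) = g k - g (k + 1) := by
    intro k
    simp only [Psi, hg]
    push_cast
    ring_nf
  have gone : ∀ k : ℤ, (k : ℝ) ≤ x - m → g k = 1 := by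
    intro k hk
    have hA : m ≤ x - k + 1 := by linarith
    have hB : m ≤ x - k := by linarith
    simp [hg, h1 _ hA, h1 _ hB]
  have gzero : ∀ k : ℤ, x + m + 1 ≤ (k : ℝ) → g k = 0 := by
    intro k hk
    have hA : x - k + 1 ≤ -m := by linarith
    have hB : x - k ≤ -m := by linarith
    simp [hg, h0 _ hA, h0 _ hB]
  have hIcc : Finset.Icc (-(N : ℤ)) N =
      (Finset.range (2 * N + 1)).map
        ⟨fun i : ℕ => (i : ℤ) - N, fun a b h => by simp only at h; omega⟩ := by
    ext k
    simp only [Finset.mem_Icc, Finset.mem_map, Finset.mem_range, Function.Embedding.coeFn_mk, DFunLike.coe]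
    constructor
    · rintro ⟨hk1, hk2⟩
      exact ⟨(k + N).toNat, by omega, by omega⟩
    · rintro ⟨a, ha, rfl⟩
      omega
  rw [hIcc, Finset.sum_map]
  simp only [Function.Embedding.coeFn_mk, DFunLike.coe, hstep]
  have hrw : ∀ i : ℕ, g ((i : ℤ) - N) - g ((i : ℤ) - N + 1)
      = (fun j : ℕ => g ((j : ℤ) - N)) i - (fun j : ℕ => g ((j : ℤ) - N)) (i + 1) := by
    intro i; simp only; push_cast; ring_nf
  rw [Finset.sum_congr rfl fun i _ => hrw i, Finset.sum_range_sub' (fun j : ℕ => g ((j : ℤ) - N))]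
  rw [gone _ (by push_cast; linarith), gzero _ (by push_cast; linarith)]
  norm_num

/-- the series of integer translates of the multivariate density function
sums to one: `∑_{k ∈ ℤ^r} Ψ_σ(x − k) = 1` for every `x ∈ ℝ^r`. -/
theorem statement15 (m : ℝ) (hm : 1 ≤ m) (σ : ℝ → ℝ) (hσ : SigmoidalD m σ) :
    ∀ (r : ℕ) (x : Fin r → ℝ), ∑' k : Fin r → ℤ, ∏ i, Psi σ (x i - (k i : ℝ)) = 1 := by
  intro r x
  obtain ⟨C, hC⟩ := (Finset.univ.image fun i => |x i| + m + 1).exists_le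
  obtain ⟨N, hNC⟩ := exists_nat_ge C
  have hN : ∀ i, |x i| + m + 1 ≤ N := fun i =>
    (hC _ (Finset.mem_image_of_mem _ (Finset.mem_univ i))).trans hNC
  rw [tsum_eq_sum (s := Fintype.piFinset fun _ : Fin r => Finset.Icc (-(N : ℤ)) N) ?_]
  · rw [← Finset.prod_univ_sum (fun _ : Fin r => Finset.Icc (-(N : ℤ)) N)
        (fun i (j : ℤ) => Psi σ (x i - (j : ℝ)))]
    exact Finset.prod_eq_one fun i _ => oneD m hm σ hσ (x i) N (hN i)
  · intro k hk
    rw [Fintype.mem_piFinset] at hk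
    push_neg at hk
    obtain ⟨i, hi⟩ := hk
    exact Finset.prod_eq_zero (Finset.mem_univ i) (psi_vanish m σ hσ (x i) N (hN i) hi)

end
end

section
/- Let m ≥ 1 and let σ be a sigmoidal function of class D(m). Then for every r ∈ ℕ, the series ∑_{k ∈ ℤ^r} Ψ_σ(x − k) converges uniformly on every compact subset of ℝ^r. -/
open MeasureTheory Filter Set
open scoped ENNReal BigOperators

noncomputable section

/-- the series `∑_{k ∈ ℤ^r} Ψ_σ(x − k)` converges uniformly on every compact
subset of `ℝ^r` (uniform convergence of the net of finite partial sums). -/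
theorem statement16 (m : ℝ) (hm : 1 ≤ m) (σ : ℝ → ℝ) (hσ : SigmoidalD m σ)
    (r : ℕ) (K : Set (Fin r → ℝ)) (hK : IsCompact K) :
    TendstoUniformlyOn
      (fun (s : Finset (Fin r → ℤ)) (x : Fin r → ℝ) => ∑ k ∈ s, ∏ i, Psi σ (x i - (k i : ℝ)))
      (fun x => ∑' k : Fin r → ℤ, ∏ i, Psi σ (x i - (k i : ℝ)))
      atTop K := by
  obtain ⟨hmeas, hmono, h0, h1⟩ := hσ
  -- Psi vanishes outside [-(m+1), m+1]
  have hPsi0 : ∀ t : ℝ, m + 1 ≤ |t| → Psi σ t = 0 := by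
    intro t ht
    rcases le_abs.mp ht with h | h
    · simp [Psi, h1 _ (by linarith : m ≤ t + 1), h1 _ (by linarith : m ≤ t - 1)]
    · simp [Psi, h0 _ (by linarith : t + 1 ≤ -m), h0 _ (by linarith : t - 1 ≤ -m)]
  obtain ⟨R, hR⟩ := isBounded_iff_forall_norm_le.mp hK.isBounded
  set N : ℕ := ⌈R + m + 1⌉₊ with hN
  have hNR : R + m + 1 ≤ (N : ℝ) := Nat.le_ceil _
  set S : Finset (Fin r → ℤ) :=
    Fintype.piFinset (fun _ : Fin r => Finset.Icc (-(N : ℤ)) (N : ℤ)) with hS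
  have hvanish : ∀ x ∈ K, ∀ k : Fin r → ℤ, k ∉ S →
      (∏ i, Psi σ (x i - (k i : ℝ))) = 0 := by
    intro x hx k hk
    rw [hS, Fintype.mem_piFinset] at hk
    push_neg at hk
    obtain ⟨i, hi⟩ := hk
    rw [Finset.mem_Icc] at hi
    have habs : (N : ℤ) + 1 ≤ |k i| := by
      rcases lt_or_ge (k i) 0 with h | h
      · rw [abs_of_neg h]; omega
      · rw [abs_of_nonneg h]; omega
    have habsR : (N : ℝ) + 1 ≤ |(k i : ℝ)| := by
      have h2 : (((N : ℤ) + 1 : ℤ) : ℝ) ≤ ((|k i| : ℤ) : ℝ) := Int.cast_le.mpr habs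
      push_cast at h2
      linarith
    have hxi : |x i| ≤ R := by
      have := norm_le_pi_norm x i
      simp only [Real.norm_eq_abs] at this
      exact this.trans (hR x hx)
    have : m + 1 ≤ |x i - (k i : ℝ)| := by
      have h1 : |(k i : ℝ)| - |x i| ≤ |x i - (k i : ℝ)| := by
        have := abs_sub_abs_le_abs_sub ((k i : ℝ)) (x i)
        rw [abs_sub_comm] at this
        linarith
      linarith
    exact Finset.prod_eq_zero (Finset.mem_univ i) (hPsi0 _ this)
  have hsum : ∀ x ∈ K,
      (∑' k : Fin r → ℤ, ∏ i, Psi σ (x i - (k i : ℝ))) = ∑ k ∈ S, ∏ i, Psi σ (x i - (k i : ℝ)) :=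
    fun x hx => tsum_eq_sum (fun k hk => hvanish x hx k hk)
  rw [Metric.tendstoUniformlyOn_iff]
  intro ε hε
  filter_upwards [Filter.eventually_ge_atTop S] with s hs x hx
  have : (∑ k ∈ s, ∏ i, Psi σ (x i - (k i : ℝ))) = ∑ k ∈ S, ∏ i, Psi σ (x i - (k i : ℝ)) :=
    (Finset.sum_subset hs (fun k _ hk => hvanish x hx k hk)).symm
  rw [hsum x hx, this, dist_self]
  exact hε

end
end

section
/- Let m ≥ 1 and let σ be a bell-regular sigmoidal function of class D(m). Then for every n ∈ ℕ and every x ∈ [−1,1], one has 1 ≥ ∑_{k=−n}^{n} Ψ_σ(nx − k) ≥ Ψ_σ(1) > 0. -/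
open MeasureTheory Filter Set
open scoped ENNReal BigOperators

noncomputable section

/-- for `x ∈ [−1,1]`, `1 ≥ ∑_{k=−n}^{n} Ψ_σ(nx − k) ≥ Ψ_σ(1) > 0`. -/
theorem statement17 (m : ℝ) (hm : 1 ≤ m) (σ : ℝ → ℝ)
    (hσ : SigmoidalD m σ) (hbell : BellRegular σ)
    (n : ℕ) (hn : 1 ≤ n) (x : ℝ) (hx : x ∈ Set.Icc (-1 : ℝ) 1) :
    (∑ k ∈ Finset.Icc (-(n : ℤ)) (n : ℤ), Psi σ ((n : ℝ) * x - (k : ℝ))) ≤ 1 ∧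
    Psi σ 1 ≤ (∑ k ∈ Finset.Icc (-(n : ℤ)) (n : ℤ), Psi σ ((n : ℝ) * x - (k : ℝ))) ∧
    0 < Psi σ 1 := by
  obtain ⟨hmeas, hmono, h0, h1⟩ := hσ
  obtain ⟨hbl, hbr, hb2⟩ := hbell
  have hσ0 : ∀ t, 0 ≤ σ t := by
    intro t
    rcases le_or_gt t (-m) with h | h
    · exact (h0 t h).ge
    · have h' := h0 (-m) le_rfl
      have := hmono h.le
      linarith
  have hσ1 : ∀ t, σ t ≤ 1 := by
    intro t
    rcases le_or_gt m t with h | h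
    · exact (h1 t h).le
    · have h' := h1 m le_rfl
      have := hmono h.le
      linarith
  have hPsi0 : ∀ t, 0 ≤ Psi σ t := by
    intro t
    have : σ (t - 1) ≤ σ (t + 1) := hmono (by linarith)
    unfold Psi; linarith
  have hP1 : 0 < Psi σ 1 :=
    lt_of_lt_of_le hb2 (hbr (by norm_num) (by norm_num) (by norm_num))
  set y : ℝ := (n : ℝ) * x with hy
  have hn' : (1 : ℝ) ≤ (n : ℝ) := by exact_mod_cast hn
  have hy1 : -(n : ℝ) ≤ y := by nlinarith [hx.1, hx.2]
  have hy2 : y ≤ (n : ℝ) := by nlinarith [hx.1, hx.2]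
  set g : ℤ → ℝ := fun k => σ (y - (k : ℝ) + 1) with hg
  have hterm : ∀ k : ℤ, Psi σ (y - (k : ℝ)) = (g k - g (k + 2)) / 2 := by
    intro k
    have harg : y - ((k : ℤ) + 2 : ℤ) + 1 = y - (k : ℝ) - 1 := by push_cast; ring
    simp only [hg, Psi, harg]
  refine ⟨?_, ?_, hP1⟩
  · -- upper bound
    have hsum : (∑ k ∈ Finset.Icc (-(n : ℤ)) (n : ℤ), Psi σ (y - (k : ℝ)))
        = ((∑ k ∈ Finset.Icc (-(n : ℤ)) (n : ℤ), g k)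
          - ∑ k ∈ Finset.Icc (-(n : ℤ)) (n : ℤ), g (k + 2)) / 2 := by
      rw [← Finset.sum_sub_distrib, Finset.sum_div]
      exact Finset.sum_congr rfl fun k _ => hterm k
    have hshift : (∑ k ∈ Finset.Icc (-(n : ℤ)) (n : ℤ), g (k + 2))
        = ∑ k ∈ Finset.Icc (-(n : ℤ) + 2) ((n : ℤ) + 2), g k := by
      rw [← Finset.map_add_right_Icc _ _ 2, Finset.sum_map]
      rfl
    have hIcc : ∀ a b : ℤ, Finset.Icc a b = Finset.Ioc (a - 1) b := by
      intro a b; ext k; simp only [Finset.mem_Icc, Finset.mem_Ioc]; omega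
    have hnz : -(n : ℤ) + 1 ≤ (n : ℤ) := by
      have : (1 : ℤ) ≤ (n : ℤ) := by exact_mod_cast hn
      omega
    have hd1 : Disjoint (Finset.Ioc (-(n : ℤ) - 1) (-(n : ℤ) + 1))
        (Finset.Ioc (-(n : ℤ) + 1) (n : ℤ)) := by
      rw [Finset.disjoint_left]
      intro k hk hk'
      simp only [Finset.mem_Ioc] at hk hk'
      omega
    have hd2 : Disjoint (Finset.Ioc (-(n : ℤ) + 1) (n : ℤ))
        (Finset.Ioc ((n : ℤ)) ((n : ℤ) + 2)) := by
      rw [Finset.disjoint_left]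
      intro k hk hk'
      simp only [Finset.mem_Ioc] at hk hk'
      omega
    have hsplit1 : (∑ k ∈ Finset.Ioc (-(n : ℤ) - 1) (-(n : ℤ) + 1), g k)
        + (∑ k ∈ Finset.Ioc (-(n : ℤ) + 1) (n : ℤ), g k)
        = ∑ k ∈ Finset.Ioc (-(n : ℤ) - 1) (n : ℤ), g k := by
      rw [← Finset.sum_union hd1, Finset.Ioc_union_Ioc_eq_Ioc (by omega) hnz]
    have hsplit2 : (∑ k ∈ Finset.Ioc (-(n : ℤ) + 1) (n : ℤ), g k)
        + (∑ k ∈ Finset.Ioc ((n : ℤ)) ((n : ℤ) + 2), g k)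
        = ∑ k ∈ Finset.Ioc (-(n : ℤ) + 1) ((n : ℤ) + 2), g k := by
      rw [← Finset.sum_union hd2, Finset.Ioc_union_Ioc_eq_Ioc hnz (by omega)]
    have hfirst : (∑ k ∈ Finset.Ioc (-(n : ℤ) - 1) (-(n : ℤ) + 1), g k) ≤ 2 := by
      have hcard : (Finset.Ioc (-(n : ℤ) - 1) (-(n : ℤ) + 1)).card = 2 := by
        rw [Int.card_Ioc]; omega
      calc (∑ k ∈ Finset.Ioc (-(n : ℤ) - 1) (-(n : ℤ) + 1), g k)
          ≤ (Finset.Ioc (-(n : ℤ) - 1) (-(n : ℤ) + 1)).card • (1 : ℝ) :=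
            Finset.sum_le_card_nsmul _ _ _ (fun k _ => hσ1 _)
        _ = 2 := by rw [hcard]; norm_num
    have hlast : 0 ≤ ∑ k ∈ Finset.Ioc ((n : ℤ)) ((n : ℤ) + 2), g k :=
      Finset.sum_nonneg fun k _ => hσ0 _
    rw [hsum, hshift, hIcc, hIcc]
    have h1eq : (-(n : ℤ) + 2) - 1 = -(n : ℤ) + 1 := by ring
    rw [h1eq]
    linarith [hsplit1, hsplit2]
  · -- lower bound
    have hk0 : ⌊y⌋ ∈ Finset.Icc (-(n : ℤ)) (n : ℤ) := by
      rw [Finset.mem_Icc]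
      constructor
      · exact Int.le_floor.mpr (by push_cast; exact hy1)
      · have : (⌊y⌋ : ℝ) ≤ (n : ℝ) := le_trans (Int.floor_le y) hy2
        exact_mod_cast this
    have hfr0 : 0 ≤ y - (⌊y⌋ : ℝ) := by linarith [Int.floor_le y]
    have hfr1 : y - (⌊y⌋ : ℝ) ≤ 1 := by linarith [Int.lt_floor_add_one y]
    have hPk : Psi σ 1 ≤ Psi σ (y - (⌊y⌋ : ℝ)) :=
      hbr (by exact hfr0) (by norm_num) hfr1
    calc Psi σ 1 ≤ Psi σ (y - (⌊y⌋ : ℝ)) := hPk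
      _ ≤ ∑ k ∈ Finset.Icc (-(n : ℤ)) (n : ℤ), Psi σ (y - (k : ℝ)) :=
        Finset.single_le_sum (f := fun k : ℤ => Psi σ (y - (k : ℝ))) (fun k _ => hPsi0 _) hk0

end
end

section
/- Let m ≥ 1 and let σ be a bell-regular sigmoidal function of class D(m). Then for every n ∈ ℕ and every x ∈ [−1,1], one has ∑_{k=−n}^{n−1} Ψ_σ(nx − k) ≥ Ψ_σ(2) > 0. -/
open MeasureTheory Filter Set
open scoped ENNReal BigOperators

noncomputable section

/-- for `x ∈ [−1,1]`, `∑_{k=−n}^{n−1} Ψ_σ(nx − k) ≥ Ψ_σ(2) > 0`. -/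
theorem statement18 (m : ℝ) (hm : 1 ≤ m) (σ : ℝ → ℝ)
    (hσ : SigmoidalD m σ) (hbell : BellRegular σ)
    (n : ℕ) (hn : 1 ≤ n) (x : ℝ) (hx : x ∈ Set.Icc (-1 : ℝ) 1) :
    Psi σ 2 ≤ (∑ k ∈ Finset.Icc (-(n : ℤ)) ((n : ℤ) - 1), Psi σ ((n : ℝ) * x - (k : ℝ))) ∧
    0 < Psi σ 2 := by
  refine ⟨?_, hbell.2.2⟩
  have hmono := hσ.2.1
  have hnonneg : ∀ y : ℝ, 0 ≤ Psi σ y := by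
    intro y
    have : σ (y - 1) ≤ σ (y + 1) := hmono (by linarith)
    simp only [Psi]; linarith
  set k₀ : ℤ := min ⌊(n : ℝ) * x⌋ ((n : ℤ) - 1) with hk₀
  have hnx_lb : -(n : ℝ) ≤ (n : ℝ) * x := by
    nlinarith [hx.1, hx.2, Nat.cast_nonneg (α := ℝ) n]
  have hnx_ub : (n : ℝ) * x ≤ (n : ℝ) := by
    nlinarith [hx.2, Nat.cast_nonneg (α := ℝ) n]
  have hn1 : (1 : ℝ) ≤ (n : ℝ) := by exact_mod_cast hn
  have hmem : k₀ ∈ Finset.Icc (-(n : ℤ)) ((n : ℤ) - 1) := by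
    rw [Finset.mem_Icc]
    constructor
    · apply le_min
      · have : ((-(n : ℤ) : ℤ) : ℝ) ≤ (n : ℝ) * x := by push_cast; linarith
        exact Int.le_floor.2 this
      · have : (1 : ℤ) ≤ (n : ℤ) := by exact_mod_cast hn
        omega
    · exact min_le_right _ _
  have hk₀le : (k₀ : ℝ) ≤ (n : ℝ) * x := by
    have h1 : (k₀ : ℤ) ≤ ⌊(n : ℝ) * x⌋ := min_le_left _ _
    calc (k₀ : ℝ) ≤ (⌊(n : ℝ) * x⌋ : ℝ) := by exact_mod_cast h1
      _ ≤ (n : ℝ) * x := Int.floor_le _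
  have hub : (n : ℝ) * x - (k₀ : ℝ) ≤ 2 := by
    rcases le_or_gt ⌊(n : ℝ) * x⌋ ((n : ℤ) - 1) with h | h
    · have : k₀ = ⌊(n : ℝ) * x⌋ := min_eq_left h
      rw [this]
      have := Int.sub_one_lt_floor ((n : ℝ) * x)
      linarith
    · have hk : k₀ = (n : ℤ) - 1 := min_eq_right (by omega)
      rw [hk]; push_cast; linarith
  have hlb : (0 : ℝ) ≤ (n : ℝ) * x - (k₀ : ℝ) := by linarith
  have hΨ : Psi σ 2 ≤ Psi σ ((n : ℝ) * x - (k₀ : ℝ)) :=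
    hbell.2.1 hlb (by norm_num) hub
  calc Psi σ 2 ≤ Psi σ ((n : ℝ) * x - (k₀ : ℝ)) := hΨ
    _ ≤ ∑ k ∈ Finset.Icc (-(n : ℤ)) ((n : ℤ) - 1), Psi σ ((n : ℝ) * x - (k : ℝ)) :=
      Finset.single_le_sum (f := fun k : ℤ => Psi σ ((n : ℝ) * x - (k : ℝ))) (fun k _ => hnonneg _) hmem

end
end

section
/- Let m ≥ 1, let σ be a bell-regular sigmoidal function of class D(m), and let r ∈ ℕ. Then for every n ∈ ℕ and every x = (x_1,…,x_r) ∈ [−1,1]^r, one has ∏_{i=1}^{r} ∑_{k_i=−n}^{n−1} Ψ_σ(n x_i − k_i) ≥ Ψ_σ(2)^r > 0; equivalently, 1 / (∏_{i=1}^{r} ∑_{k_i=−n}^{n−1} Ψ_σ(n x_i − k_i)) ≤ 1 / Ψ_σ(2)^r. -/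
open MeasureTheory Filter Set
open scoped ENNReal BigOperators

noncomputable section

/-- for `x ∈ [−1,1]^r`,
`∏_{i} ∑_{k_i=−n}^{n−1} Ψ_σ(n x_i − k_i) ≥ Ψ_σ(2)^r > 0`, equivalently the reciprocal is
bounded by `1 / Ψ_σ(2)^r`. -/
theorem statement19 (m : ℝ) (hm : 1 ≤ m) (σ : ℝ → ℝ)
    (hσ : SigmoidalD m σ) (hbell : BellRegular σ)
    (r : ℕ) (n : ℕ) (hn : 1 ≤ n) (x : Fin r → ℝ) (hx : ∀ i, x i ∈ Set.Icc (-1 : ℝ) 1) :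
    Psi σ 2 ^ r ≤
      (∏ i, ∑ k ∈ Finset.Icc (-(n : ℤ)) ((n : ℤ) - 1), Psi σ ((n : ℝ) * x i - (k : ℝ))) ∧
    0 < Psi σ 2 ^ r ∧
    1 / (∏ i, ∑ k ∈ Finset.Icc (-(n : ℤ)) ((n : ℤ) - 1), Psi σ ((n : ℝ) * x i - (k : ℝ))) ≤
      1 / Psi σ 2 ^ r := by
  have hmono := hσ.2.1
  have hPsi_nonneg : ∀ t : ℝ, 0 ≤ Psi σ t := by
    intro t
    have : σ (t - 1) ≤ σ (t + 1) := hmono (by linarith)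
    unfold Psi; linarith
  have hPsi2 : 0 < Psi σ 2 := hbell.2.2
  have hterm : ∀ i, Psi σ 2 ≤
      ∑ k ∈ Finset.Icc (-(n : ℤ)) ((n : ℤ) - 1), Psi σ ((n : ℝ) * x i - (k : ℝ)) := by
    intro i
    set y : ℝ := (n : ℝ) * x i with hy
    have hxi := hx i
    have hylb : -(n : ℝ) ≤ y := by
      have := hxi.1
      have hn0 : (0 : ℝ) ≤ n := by positivity
      nlinarith
    have hyub : y ≤ (n : ℝ) := by
      have := hxi.2
      have hn0 : (0 : ℝ) ≤ n := by positivity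
      nlinarith
    set k0 : ℤ := min ⌊y⌋ ((n : ℤ) - 1) with hk0
    have hmem : k0 ∈ Finset.Icc (-(n : ℤ)) ((n : ℤ) - 1) := by
      rw [Finset.mem_Icc]
      constructor
      · apply le_min
        · exact Int.le_floor.2 (by exact_mod_cast hylb)
        · omega
      · exact min_le_right _ _
    have hk0le : (k0 : ℝ) ≤ y := by
      rcases min_cases ⌊y⌋ ((n : ℤ) - 1) with ⟨h1, h2⟩ | ⟨h1, h2⟩
      · rw [hk0, h1]; exact Int.floor_le y
      · rw [hk0, h1]
        calc ((n : ℤ) - 1 : ℤ) ≤ (⌊y⌋ : ℝ) := by exact_mod_cast h2.le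
          _ ≤ y := Int.floor_le y
    have hk0ge : y - (k0 : ℝ) ≤ 2 := by
      rcases min_cases ⌊y⌋ ((n : ℤ) - 1) with ⟨h1, h2⟩ | ⟨h1, h2⟩
      · rw [hk0, h1]
        have := Int.lt_floor_add_one y
        linarith
      · rw [hk0, h1]
        push_cast
        linarith
    have hstep : Psi σ 2 ≤ Psi σ (y - (k0 : ℝ)) := by
      exact hbell.2.1 (by simpa using sub_nonneg.2 hk0le) (by norm_num) hk0ge
    calc Psi σ 2 ≤ Psi σ (y - (k0 : ℝ)) := hstep
      _ ≤ ∑ k ∈ Finset.Icc (-(n : ℤ)) ((n : ℤ) - 1), Psi σ (y - (k : ℝ)) :=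
        Finset.single_le_sum (f := fun k : ℤ => Psi σ (y - (k : ℝ))) (fun k _ => hPsi_nonneg _) hmem
  have hprod : Psi σ 2 ^ r ≤
      ∏ i, ∑ k ∈ Finset.Icc (-(n : ℤ)) ((n : ℤ) - 1), Psi σ ((n : ℝ) * x i - (k : ℝ)) := by
    calc Psi σ 2 ^ r = ∏ _i : Fin r, Psi σ 2 := by
          rw [Finset.prod_const, Finset.card_univ, Fintype.card_fin]
      _ ≤ _ := Finset.prod_le_prod (fun i _ => hPsi2.le) (fun i _ => hterm i)
  have hpow : 0 < Psi σ 2 ^ r := pow_pos hPsi2 r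
  exact ⟨hprod, hpow, one_div_le_one_div_of_le hpow hprod⟩

end
end
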